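/- arXiv:2211.04395 — 2 statements merged into one kernel-verified Lean document; each statement's English description precedes it below -/
import Mathlib

section
/- Let σ be a generalized sigmoid with negative entropy ψ. Let W be a real J×K matrix, A a real I×K matrix, x ∈ ℝ^J, y ∈ ℝ^K, b ∈ ℝ^I and λ ∈ ℝ^I. Define z* ∈ ℝ^K by z*_k = σ((Wᵀx + Aᵀλ)_k). Then z* is a critical point of the Lagrangian L(z) = (z − y)ᵀWᵀx − Σ_k ψ(z_k) + λᵀ(Az − b) (its gradient in z vanishes at z*), and the value of L at z* equals −yᵀWᵀx − bᵀλ + Σ_{k=1}^{K} φ((Wᵀx + Aᵀλ)_k). -/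
/-!
With `θ = Wᵀx + Aᵀλ` the Lagrangian separates as `L z = ∑ₖ (zₖ θₖ - ψ zₖ) - yᵀWᵀx - bᵀλ`.
`ψ` is the Legendre transform of `φ`: `ψ (σ t) = σ t * t - φ t`, and since `u` inverts the strictly
increasing `σ` it is continuous, so the inverse function theorem gives `ψ' (σ t) = t`. Hence the
`k`-th partial derivative of `L` at `z*` is `θₖ - θₖ = 0`, and each summand at `z*` equals `φ θₖ`.
-/

open Matrix Set Filter Topology

theorem Continuous.range_mem_nhds_of_strictMono {α β : Type*} [LinearOrder α]
    [TopologicalSpace α] [PreconnectedSpace α] [NoMinOrder α] [NoMaxOrder α]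
    [ConditionallyCompleteLinearOrder β] [TopologicalSpace β] [OrderTopology β] {f : α → β} (hcont : Continuous f)
    (hmono : StrictMono f) (c : α) : range f ∈ 𝓝 (f c) := by
  obtain ⟨a, hac⟩ := exists_lt c
  obtain ⟨b, hcb⟩ := exists_gt c
  exact mem_of_superset (Icc_mem_nhds (hmono hac) (hmono hcb))
    ((isPreconnected_range hcont).Icc_subset (mem_range_self a) (mem_range_self b))

theorem Function.LeftInverse.hasDerivAt_of_deriv_pos {f f' g : ℝ → ℝ}
    (hg : Function.LeftInverse g f) (hf : ∀ t, HasDerivAt f (f' t) t) (hpos : ∀ t, 0 < f' t)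
    (c : ℝ) : HasDerivAt g (f' c)⁻¹ (f c) := by
  have hmono : StrictMono f := strictMono_of_hasDerivAt_pos hf hpos
  have hcont : Continuous f := continuous_iff_continuousAt.2 fun t => (hf t).continuousAt
  have hrange := hcont.range_mem_nhds_of_strictMono hmono c
  have hg_mono : MonotoneOn g (range f) := by
    rintro _ ⟨s, rfl⟩ _ ⟨t, rfl⟩ hst
    rw [hg s, hg t]
    exact hmono.le_iff_le.1 hst
  have hg_cont : ContinuousAt g (f c) :=
    continuousAt_of_monotoneOn_of_image_mem_nhds hg_mono hrange
      (mem_of_superset univ_mem fun t _ => ⟨f t, mem_range_self t, hg t⟩)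
  refine HasDerivAt.of_local_left_inverse hg_cont (by rw [hg c]; exact hf c) (hpos c).ne' ?_
  filter_upwards [hrange] with _ ⟨t, ht⟩
  rw [← ht, hg t]

theorem hasDerivAt_negEntropy {σ σ' φ u ψ : ℝ → ℝ} (hu : Function.LeftInverse u σ)
    (hψ : ∀ z, ψ z = z * u z - φ (u z)) (hσ : ∀ t, HasDerivAt σ (σ' t) t)
    (hσ'pos : ∀ t, 0 < σ' t) (hφ : ∀ t, HasDerivAt φ (σ t) t) (c : ℝ) :
    HasDerivAt ψ c (σ c) := by
  have hu' := hu.hasDerivAt_of_deriv_pos hσ hσ'pos c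
  rw [show ψ = fun z => z * u z - φ (u z) from funext hψ]
  exact ((hasDerivAt_id' (σ c)).mul hu').sub ((hφ (u (σ c))).comp (σ c) hu')
    |>.congr_deriv (by rw [hu c]; ring)

theorem negEntropy_apply_sigmoid {σ φ u ψ : ℝ → ℝ} (hu : Function.LeftInverse u σ)
    (hψ : ∀ z, ψ z = z * u z - φ (u z)) (t : ℝ) : ψ (σ t) = σ t * t - φ t := by
  rw [hψ, hu t]

theorem hasDerivAt_sum_update {ι : Type*} [Fintype ι] [DecidableEq ι] (g : ι → ℝ → ℝ)
    (z : ι → ℝ) (k : ι) {d : ℝ} (h : HasDerivAt (g k) d (z k)) :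
    HasDerivAt (fun t => ∑ j, g j (Function.update z k t j)) d (z k) := by
  have hsplit : ∀ t, ∑ j, g j (Function.update z k t j)
      = g k t + ∑ j ∈ Finset.univ.erase k, g j (z j) := fun t => by
    rw [← Finset.add_sum_erase _ _ (Finset.mem_univ k), Function.update_self]
    congr 1
    exact Finset.sum_congr rfl fun j hj =>
      by rw [Function.update_of_ne (Finset.ne_of_mem_erase hj)]
  simpa only [hsplit] using h.add_const _

theorem lagrangian_eq_sum {ι m n : Type*} [Fintype ι] [Fintype m] [Fintype n]
    (ψ : ℝ → ℝ) (W : Matrix m ι ℝ) (A : Matrix n ι ℝ) (x : m → ℝ) (y z : ι → ℝ)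
    (b lam : n → ℝ) :
    (z - y) ⬝ᵥ (Wᵀ *ᵥ x) - (∑ k, ψ (z k)) + lam ⬝ᵥ (A *ᵥ z - b)
      = ∑ k, (z k * (Wᵀ *ᵥ x + Aᵀ *ᵥ lam) k - ψ (z k))
        - y ⬝ᵥ (Wᵀ *ᵥ x) - b ⬝ᵥ lam := by
  rw [Finset.sum_sub_distrib]
  change _ = z ⬝ᵥ (Wᵀ *ᵥ x + Aᵀ *ᵥ lam) - _ - _ - _
  rw [sub_dotProduct, dotProduct_sub, dotProduct_mulVec lam, ← mulVec_transpose A,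
    dotProduct_add, dotProduct_comm lam b, dotProduct_comm (Aᵀ *ᵥ lam)]
  ring

theorem lagrangian_critical_point_and_value_general
    (σ σ' φ u ψ : ℝ → ℝ)
    (hσ : ∀ t, HasDerivAt σ (σ' t) t)
    (hσ'pos : ∀ t, 0 < σ' t)
    (hφ : ∀ t, HasDerivAt φ (σ t) t)
    (hu : ∀ t, u (σ t) = t)
    (hψ : ∀ z, ψ z = z * u z - φ (u z))
    {I J K : ℕ} (W : Matrix (Fin J) (Fin K) ℝ) (A : Matrix (Fin I) (Fin K) ℝ)
    (x : Fin J → ℝ) (y : Fin K → ℝ) (b lam : Fin I → ℝ)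
    (L : (Fin K → ℝ) → ℝ)
    (hL : ∀ z : Fin K → ℝ,
      L z = (z - y) ⬝ᵥ (Wᵀ *ᵥ x) - (∑ k, ψ (z k)) + lam ⬝ᵥ (A *ᵥ z - b))
    (zStar : Fin K → ℝ)
    (hzStar : ∀ k, zStar k = σ ((Wᵀ *ᵥ x + Aᵀ *ᵥ lam) k)) :
    (∀ k, HasDerivAt (fun t => L (Function.update zStar k t)) 0 (zStar k)) ∧
    L zStar = -(y ⬝ᵥ (Wᵀ *ᵥ x)) - b ⬝ᵥ lam + ∑ k, φ ((Wᵀ *ᵥ x + Aᵀ *ᵥ lam) k) := by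
  simp only [hL, lagrangian_eq_sum]
  set θ := Wᵀ *ᵥ x + Aᵀ *ᵥ lam
  constructor
  · intro k
    have hψ' := hasDerivAt_negEntropy hu hψ hσ hσ'pos hφ (θ k)
    rw [← hzStar] at hψ'
    have hk : HasDerivAt (fun t => t * θ k - ψ t) 0 (zStar k) :=
      ((hasDerivAt_mul_const (θ k)).sub hψ').congr_deriv (sub_self _)
    exact ((hasDerivAt_sum_update (fun j t => t * θ j - ψ t) zStar k hk).sub_const _).sub_const _
  · simp only [hzStar, negEntropy_apply_sigmoid hu hψ, sub_sub_cancel]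
    ring

/-- Let `σ` be a generalized sigmoid with negative entropy
`ψ`.  Let `W` be a real `J × K` matrix, `A` a real `I × K` matrix, `x ∈ ℝ^J`,
`y ∈ ℝ^K`, `b ∈ ℝ^I` and `λ ∈ ℝ^I`.  Define `z* ∈ ℝ^K` by
`z* k = σ ((Wᵀx + Aᵀλ) k)`.  Then `z*` is a critical point of the Lagrangian
`L z = (z - y)ᵀ Wᵀ x - ∑ k, ψ (z k) + λᵀ (A z - b)` (its gradient in `z`
vanishes at `z*`, i.e. every partial derivative of `L` vanishes there), and
the value of `L` at `z*` equals `-yᵀWᵀx - bᵀλ + ∑ k, φ ((Wᵀx + Aᵀλ) k)`. -/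
theorem lagrangian_critical_point_and_value
    (σ σ' φ u ψ : ℝ → ℝ)
    (hσ : ∀ t, HasDerivAt σ (σ' t) t)
    (hσ'cont : Continuous σ')
    (hσ'pos : ∀ t, 0 < σ' t)
    (hφ : ∀ t, HasDerivAt φ (σ t) t)
    (hu : ∀ t, u (σ t) = t)
    (hψ : ∀ z, ψ z = z * u z - φ (u z))
    {I J K : ℕ} (W : Matrix (Fin J) (Fin K) ℝ) (A : Matrix (Fin I) (Fin K) ℝ)
    (x : Fin J → ℝ) (y : Fin K → ℝ) (b lam : Fin I → ℝ)
    (L : (Fin K → ℝ) → ℝ)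
    (hL : ∀ z : Fin K → ℝ,
      L z = (z - y) ⬝ᵥ (Wᵀ *ᵥ x) - (∑ k, ψ (z k)) + lam ⬝ᵥ (A *ᵥ z - b))
    (zStar : Fin K → ℝ)
    (hzStar : ∀ k, zStar k = σ ((Wᵀ *ᵥ x + Aᵀ *ᵥ lam) k)) :
    (∀ k, HasDerivAt (fun t => L (Function.update zStar k t)) 0 (zStar k)) ∧
    L zStar = -(y ⬝ᵥ (Wᵀ *ᵥ x)) - b ⬝ᵥ lam + ∑ k, φ ((Wᵀ *ᵥ x + Aᵀ *ᵥ lam) k) :=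
  lagrangian_critical_point_and_value_general σ σ' φ u ψ hσ hσ'pos hφ hu hψ W A x y b lam L hL zStar
    hzStar
end

section
/- Let σ be a generalized sigmoid with antiderivative φ. Let W be a real J×K matrix, A a real I×K matrix, x ∈ ℝ^J, y ∈ ℝ^K and b = Ay ∈ ℝ^I. Define the dual loss E(λ) = −yᵀ(Wᵀx + Aᵀλ) + Σ_{k=1}^{K} φ((Wᵀx + Aᵀλ)_k) for λ ∈ ℝ^I. Then the gradient of E at λ equals A·z(λ) − b, where z(λ)_k = σ((Wᵀx + Aᵀλ)_k); in particular, if λ is a critical point of E then the nonlinear predictor z(λ) satisfies the linear equality constraints A·z(λ) = b. -/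
open Matrix

/-! The dual loss is `E λ = ∑ₖ (φ (cₖ) - yₖ cₖ)` with `c = Wᵀx + Aᵀλ` affine in `λ`, and moving `λᵢ`
moves `c` along the `i`-th row of `A`. By the chain rule `∂E/∂λᵢ = ∑ₖ (σ (cₖ) - yₖ) Aᵢₖ`, which
is the `i`-th entry of `A (z - y) = A z - b`. At a critical point these entries vanish. -/

section

variable {𝕜 : Type*} [NontriviallyNormedField 𝕜] {m n : Type*} [Fintype m] [Fintype n]

theorem hasDerivAt_mulVec_update [CompleteSpace 𝕜] [DecidableEq n] (M : Matrix m n 𝕜)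
    (v : n → 𝕜) (j : n) (t : 𝕜) : HasDerivAt (fun s => M *ᵥ Function.update v j s) (M.col j) t := by
  rw [← mulVec_single_one]
  exact (mulVecLin M).toContinuousLinearMap.hasFDerivAt.comp_hasDerivAt t (hasDerivAt_update v j t)

theorem HasDerivAt.sum_comp_apply {f f' : n → 𝕜 → 𝕜} (hf : ∀ k u, HasDerivAt (f k) (f' k u) u)
    {γ : 𝕜 → n → 𝕜} {γ' : n → 𝕜} {t : 𝕜} (hγ : HasDerivAt γ γ' t) :
    HasDerivAt (fun s => ∑ k, f k (γ s k)) (∑ k, f' k (γ t k) * γ' k) t :=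
  HasDerivAt.fun_sum fun k _ => (hf k (γ t k)).comp t (hasDerivAt_pi.mp hγ k)

end

theorem dual_loss_gradient_and_constraint_general
    (σ φ : ℝ → ℝ)
    (hφ : ∀ t, HasDerivAt φ (σ t) t)
    {I J K : ℕ} (W : Matrix (Fin J) (Fin K) ℝ) (A : Matrix (Fin I) (Fin K) ℝ)
    (x : Fin J → ℝ) (y : Fin K → ℝ) (b : Fin I → ℝ)
    (hb : b = A *ᵥ y)
    (E : (Fin I → ℝ) → ℝ)
    (hE : ∀ lam : Fin I → ℝ,
      E lam = -(y ⬝ᵥ (Wᵀ *ᵥ x + Aᵀ *ᵥ lam)) + ∑ k, φ ((Wᵀ *ᵥ x + Aᵀ *ᵥ lam) k))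
    (z : (Fin I → ℝ) → Fin K → ℝ)
    (hz : ∀ lam k, z lam k = σ ((Wᵀ *ᵥ x + Aᵀ *ᵥ lam) k)) :
    (∀ (lam : Fin I → ℝ) (i : Fin I),
      HasDerivAt (fun t => E (Function.update lam i t)) ((A *ᵥ z lam - b) i) (lam i)) ∧
    (∀ lam : Fin I → ℝ,
      (∀ i : Fin I, HasDerivAt (fun t => E (Function.update lam i t)) 0 (lam i)) →
        A *ᵥ z lam = b) := by
  have gradient (lam : Fin I → ℝ) (i : Fin I) :
      HasDerivAt (fun t => E (Function.update lam i t)) ((A *ᵥ z lam - b) i) (lam i) := by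
    set c : (Fin I → ℝ) → Fin K → ℝ := fun μ => Wᵀ *ᵥ x + Aᵀ *ᵥ μ
    have hE_sum (μ : Fin I → ℝ) : E μ = ∑ k, (φ (c μ k) - y k * c μ k) := by
      rw [hE, Finset.sum_sub_distrib, dotProduct]; ring
    have hc : HasDerivAt (fun t => c (Function.update lam i t)) (A.row i) (lam i) :=
      (hasDerivAt_mulVec_update Aᵀ lam i (lam i)).const_add _
    have hterm (k : Fin K) (u : ℝ) : HasDerivAt (fun u => φ u - y k * u) (σ u - y k) u := by
      simpa only [mul_one] using (hφ u).fun_sub ((hasDerivAt_id' u).const_mul (y k))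
    simp_rw [hE_sum]
    refine (HasDerivAt.sum_comp_apply hterm hc).congr_deriv ?_
    rw [Function.update_eq_self, hb, ← mulVec_sub]
    simp only [mulVec, dotProduct, Pi.sub_apply, hz, row_apply, c, mul_comm]
  refine ⟨gradient, fun lam hcrit => funext fun i => ?_⟩
  exact sub_eq_zero.mp ((gradient lam i).unique (hcrit i))

/-- Let `σ` be a generalized sigmoid with antiderivative
`φ`.  Let `W` be a real `J × K` matrix, `A` a real `I × K` matrix, `x ∈ ℝ^J`,
`y ∈ ℝ^K` and `b = A y ∈ ℝ^I`.  Define the dual loss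
`E λ = -yᵀ (Wᵀx + Aᵀλ) + ∑ k, φ ((Wᵀx + Aᵀλ) k)` for `λ ∈ ℝ^I`.  Then the
gradient of `E` at `λ` equals `A ⬝ z(λ) - b` (componentwise, each partial
derivative `∂E/∂λᵢ` equals `(A ⬝ z(λ) - b) i`), where
`z(λ) k = σ ((Wᵀx + Aᵀλ) k)`; in particular, if `λ` is a critical point of
`E` then the nonlinear predictor `z(λ)` satisfies the linear equality
constraints `A ⬝ z(λ) = b`. -/
theorem dual_loss_gradient_and_constraint
    (σ σ' φ : ℝ → ℝ)
    (hσ : ∀ t, HasDerivAt σ (σ' t) t)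
    (hσ'cont : Continuous σ')
    (hσ'pos : ∀ t, 0 < σ' t)
    (hφ : ∀ t, HasDerivAt φ (σ t) t)
    {I J K : ℕ} (W : Matrix (Fin J) (Fin K) ℝ) (A : Matrix (Fin I) (Fin K) ℝ)
    (x : Fin J → ℝ) (y : Fin K → ℝ) (b : Fin I → ℝ)
    (hb : b = A *ᵥ y)
    (E : (Fin I → ℝ) → ℝ)
    (hE : ∀ lam : Fin I → ℝ,
      E lam = -(y ⬝ᵥ (Wᵀ *ᵥ x + Aᵀ *ᵥ lam)) + ∑ k, φ ((Wᵀ *ᵥ x + Aᵀ *ᵥ lam) k))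
    (z : (Fin I → ℝ) → Fin K → ℝ)
    (hz : ∀ lam k, z lam k = σ ((Wᵀ *ᵥ x + Aᵀ *ᵥ lam) k)) :
    (∀ (lam : Fin I → ℝ) (i : Fin I),
      HasDerivAt (fun t => E (Function.update lam i t)) ((A *ᵥ z lam - b) i) (lam i)) ∧
    (∀ lam : Fin I → ℝ,
      (∀ i : Fin I, HasDerivAt (fun t => E (Function.update lam i t)) 0 (lam i)) →
        A *ᵥ z lam = b) :=
  dual_loss_gradient_and_constraint_general σ φ hφ W A x y b hb E hE z hz
end
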